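/- arXiv:2402.11888 — 6 statements merged into one kernel-verified Lean document; each statement's English description precedes it below -/
import Mathlib

section
/- If the three-dimensional Volterra lattice y₁' = y₁(x₁ - α), x₁' = x₁(y₂ - y₁), y₂' = y₂(α - x₁) satisfies the constraint y₁(t)·y₂(t) = ℓ for a constant ℓ > 0 and y₁ > 0, then (x₁, y₁) satisfies the reduced planar system y₁' = y₁(x₁ - α), x₁' = x₁(ℓ/y₁ - y₁), and the quantity G(t) = y₁(t) + x₁(t) + ℓ/y₁(t) - α·log(x₁(t)) is conserved (assuming x₁ > 0). -/
/-! On the invariant surface `y₁ y₂ = ℓ` one has `y₂ = ℓ / y₁`, which turns the middle equation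
into the planar system. Along that system the derivative of `y₁ + x₁ + ℓ / y₁ - α log x₁` is
`(1 - ℓ / y₁²) y₁ (x₁ - α) + (1 - α / x₁) x₁ (ℓ / y₁ - y₁) = 0`, so `G` is constant. -/

lemma hasDerivAt_planar_first_integral {α ℓ : ℝ} {y x : ℝ → ℝ} {t : ℝ}
    (hy : HasDerivAt y (y t * (x t - α)) t) (hx : HasDerivAt x (x t * (ℓ / y t - y t)) t)
    (hy0 : y t ≠ 0) (hx0 : x t ≠ 0) :
    HasDerivAt (fun s => y s + x s + ℓ / y s - α * Real.log (x s)) 0 t := by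
  have hinv := (hasDerivAt_const t ℓ).div hy hy0
  have hlog := (hx.log hx0).const_mul α
  refine (((hy.add hx).add hinv).sub hlog).congr_deriv ?_
  field_simp
  ring

theorem volterra3_reduction_to_planar_general
    (α ℓ : ℝ) (y₁ x₁ y₂ : ℝ → ℝ)
    (hy₁ : ∀ t, HasDerivAt y₁ (y₁ t * (x₁ t - α)) t)
    (hx₁ : ∀ t, HasDerivAt x₁ (x₁ t * (y₂ t - y₁ t)) t)
    (hy₁pos : ∀ t, 0 < y₁ t) (hx₁pos : ∀ t, 0 < x₁ t)
    (hconstr : ∀ t, y₁ t * y₂ t = ℓ)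
    (G : ℝ → ℝ)
    (hG : ∀ t, G t = y₁ t + x₁ t + ℓ / y₁ t - α * Real.log (x₁ t)) :
    (∀ t, HasDerivAt y₁ (y₁ t * (x₁ t - α)) t)
      ∧ (∀ t, HasDerivAt x₁ (x₁ t * (ℓ / y₁ t - y₁ t)) t)
      ∧ (∀ s t : ℝ, G s = G t) := by
  have hy₂ : ∀ t, y₂ t = ℓ / y₁ t := fun t =>
    eq_div_of_mul_eq (hy₁pos t).ne' (by rw [mul_comm, hconstr t])
  have hx₁' : ∀ t, HasDerivAt x₁ (x₁ t * (ℓ / y₁ t - y₁ t)) t := fun t => hy₂ t ▸ hx₁ t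
  have hG' : ∀ t, HasDerivAt G 0 t := by
    rw [funext hG]
    exact fun t => hasDerivAt_planar_first_integral (hy₁ t) (hx₁' t) (hy₁pos t).ne' (hx₁pos t).ne'
  exact ⟨hy₁, hx₁', is_const_of_deriv_eq_zero (fun t => (hG' t).differentiableAt)
    fun t => (hG' t).deriv⟩

theorem volterra3_reduction_to_planar
    (α ℓ : ℝ) (hℓ : 0 < ℓ) (y₁ x₁ y₂ : ℝ → ℝ)
    (hy₁ : ∀ t, HasDerivAt y₁ (y₁ t * (x₁ t - α)) t)
    (hx₁ : ∀ t, HasDerivAt x₁ (x₁ t * (y₂ t - y₁ t)) t)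
    (hy₂ : ∀ t, HasDerivAt y₂ (y₂ t * (α - x₁ t)) t)
    (hy₁pos : ∀ t, 0 < y₁ t) (hx₁pos : ∀ t, 0 < x₁ t)
    (hconstr : ∀ t, y₁ t * y₂ t = ℓ)
    (G : ℝ → ℝ)
    (hG : ∀ t, G t = y₁ t + x₁ t + ℓ / y₁ t - α * Real.log (x₁ t)) :
    (∀ t, HasDerivAt y₁ (y₁ t * (x₁ t - α)) t)
      ∧ (∀ t, HasDerivAt x₁ (x₁ t * (ℓ / y₁ t - y₁ t)) t)
      ∧ (∀ s t : ℝ, G s = G t) :=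
  volterra3_reduction_to_planar_general α ℓ y₁ x₁ y₂ hy₁ hx₁ hy₁pos hx₁pos hconstr G hG
end

section
/- For the planar reduced system y' = y(x - α), x' = x(ℓ/y - y) with x, y > 0 and constants α ∈ ℝ, ℓ > 0, the function G(t) = y(t) + x(t) + ℓ/y(t) - α·log(x(t)) is constant. -/
noncomputable def reducedEnergy (α ℓ x y : ℝ) : ℝ :=
  y + x + ℓ / y - α * Real.log x

theorem hasDerivAt_reducedEnergy_comp_eq_zero {α ℓ : ℝ} {x y : ℝ → ℝ} {t : ℝ}
    (hx0 : x t ≠ 0) (hy0 : y t ≠ 0)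
    (hy : HasDerivAt y (y t * (x t - α)) t)
    (hx : HasDerivAt x (x t * (ℓ / y t - y t)) t) :
    HasDerivAt (fun s => reducedEnergy α ℓ (x s) (y s)) 0 t := by
  have hinv : HasDerivAt (fun s => ℓ / y s) (-(ℓ * (y t * (x t - α))) / y t ^ 2) t :=
    ((hasDerivAt_const t ℓ).div hy hy0).congr_deriv (by ring)
  have hlog : HasDerivAt (fun s => Real.log (x s)) ((x t)⁻¹ * (x t * (ℓ / y t - y t))) t :=
    (Real.hasDerivAt_log hx0).comp t hx
  refine (((hy.add hx).add hinv).sub (hlog.const_mul α)).congr_deriv ?_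
  field_simp
  ring

theorem planar_reduced_system_conserved_general
    (α ℓ : ℝ) (x y : ℝ → ℝ)
    (hxpos : ∀ t, 0 < x t) (hypos : ∀ t, 0 < y t)
    (hy : ∀ t, HasDerivAt y (y t * (x t - α)) t)
    (hx : ∀ t, HasDerivAt x (x t * (ℓ / y t - y t)) t)
    (G : ℝ → ℝ)
    (hG : ∀ t, G t = y t + x t + ℓ / y t - α * Real.log (x t)) :
    ∀ s t : ℝ, G s = G t := by
  have hG' : G = fun s => reducedEnergy α ℓ (x s) (y s) := funext hG
  have hderiv (t : ℝ) : HasDerivAt G 0 t := hG' ▸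
    hasDerivAt_reducedEnergy_comp_eq_zero (hxpos t).ne' (hypos t).ne' (hy t) (hx t)
  exact is_const_of_deriv_eq_zero (fun t => (hderiv t).differentiableAt)
    (fun t => (hderiv t).deriv)

theorem planar_reduced_system_conserved
    (α ℓ : ℝ) (hℓ : 0 < ℓ) (x y : ℝ → ℝ)
    (hxpos : ∀ t, 0 < x t) (hypos : ∀ t, 0 < y t)
    (hy : ∀ t, HasDerivAt y (y t * (x t - α)) t)
    (hx : ∀ t, HasDerivAt x (x t * (ℓ / y t - y t)) t)
    (G : ℝ → ℝ)
    (hG : ∀ t, G t = y t + x t + ℓ / y t - α * Real.log (x t)) :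
    ∀ s t : ℝ, G s = G t :=
  planar_reduced_system_conserved_general α ℓ x y hxpos hypos hy hx G hG
end

section
/- Suppose ϕ : I → ℝ is differentiable and satisfies ϕ·ϕ' + f₂·F·ϕ + f₃·F² = 0 on I, where F' = f₁·F, G' = f₂·F, and the constant k equals f₂(x)/(f₃(x)·F(x)) for all x ∈ I (with k ≠ 0). Then the potential Ψ(x) = (1 + k·ϕ(x))·exp(-(1 + k·ϕ(x)) - k·G(x)) is constant on I. -/
/-! With `w = 1 + k ϕ`, the derivative of `w · exp (-w - k G)` is `(w' (1 - w) - w · k G') · exp (…)`.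
Since `w' (1 - w) = -k² ϕ ϕ'` and `k G' = k f₂ F = k² f₃ F²`, the prefactor is
`-k² (ϕ ϕ' + f₂ F ϕ + f₃ F²)`, which vanishes by the ODE. -/

open Real

theorem Set.OrdConnected.is_const_of_hasDerivAt_eq_zero {E : Type*} [NormedAddCommGroup E]
    [NormedSpace ℝ E] {s : Set ℝ} (hs : s.OrdConnected) {f : ℝ → E}
    (hf : ∀ x ∈ s, HasDerivAt f 0 x) : ∀ x ∈ s, ∀ y ∈ s, f x = f y := by
  intro x hx y hy
  have h := (convex_iff_ordConnected.mpr hs).norm_image_sub_le_of_norm_hasDerivWithin_le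
    (fun z hz => (hf z hz).hasDerivWithinAt) (fun _ _ => norm_zero.le) hy hx
  rw [zero_mul, norm_le_zero_iff, sub_eq_zero] at h
  exact h

theorem hasDerivAt_mul_exp_neg_sub {w v : ℝ → ℝ} {w' v' x : ℝ} (hw : HasDerivAt w w' x)
    (hv : HasDerivAt v v' x) :
    HasDerivAt (fun y => w y * exp (-w y - v y))
      ((w' * (1 - w x) - w x * v') * exp (-w x - v x)) x :=
  (hw.mul (hw.neg.sub hv).exp).congr_deriv <| by simp only [Pi.sub_apply, Pi.neg_apply]; ring

theorem abel_potential_constant_general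
    (I : Set ℝ) (hIconn : I.OrdConnected)
    (f₂ f₃ : ℝ → ℝ)
    (F G : ℝ → ℝ)
    (hG : ∀ x ∈ I, HasDerivAt G (f₂ x * F x) x)
    (k : ℝ) (hkf : ∀ x ∈ I, k * f₃ x * F x = f₂ x)
    (ϕ : ℝ → ℝ) (ϕ' : ℝ → ℝ)
    (hϕ : ∀ x ∈ I, HasDerivAt ϕ (ϕ' x) x)
    (hode : ∀ x ∈ I, ϕ x * ϕ' x + f₂ x * F x * ϕ x + f₃ x * F x ^ 2 = 0)
    (Ψ : ℝ → ℝ)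
    (hΨ : ∀ x ∈ I, Ψ x = (1 + k * ϕ x) * Real.exp (-(1 + k * ϕ x) - k * G x)) :
    ∀ x ∈ I, ∀ y ∈ I, Ψ x = Ψ y := by
  have hderiv : ∀ x ∈ I,
      HasDerivAt (fun y => (1 + k * ϕ y) * exp (-(1 + k * ϕ y) - k * G y)) 0 x := by
    intro x hx
    convert hasDerivAt_mul_exp_neg_sub (((hϕ x hx).const_mul k).const_add 1)
      ((hG x hx).const_mul k) using 1
    linear_combination (k ^ 2 * exp (-(1 + k * ϕ x) - k * G x)) * hode x hx
      - (k * F x * exp (-(1 + k * ϕ x) - k * G x)) * hkf x hx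
  intro x hx y hy
  rw [hΨ x hx, hΨ y hy]
  exact hIconn.is_const_of_hasDerivAt_eq_zero hderiv x hx y hy

theorem abel_potential_constant
    (I : Set ℝ) (hI : IsOpen I) (hIconn : I.OrdConnected)
    (f₁ f₂ f₃ : ℝ → ℝ)
    (hf₁ : ContinuousOn f₁ I) (hf₂ : ContinuousOn f₂ I) (hf₃ : ContinuousOn f₃ I)
    (hf₃0 : ∀ x ∈ I, f₃ x ≠ 0)
    (F G : ℝ → ℝ) (hF0 : ∀ x ∈ I, F x ≠ 0)
    (hF : ∀ x ∈ I, HasDerivAt F (f₁ x * F x) x)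
    (hG : ∀ x ∈ I, HasDerivAt G (f₂ x * F x) x)
    (k : ℝ) (hk : k ≠ 0) (hkf : ∀ x ∈ I, k * f₃ x * F x = f₂ x)
    (ϕ : ℝ → ℝ) (ϕ' : ℝ → ℝ)
    (hϕ : ∀ x ∈ I, HasDerivAt ϕ (ϕ' x) x)
    (hode : ∀ x ∈ I, ϕ x * ϕ' x + f₂ x * F x * ϕ x + f₃ x * F x ^ 2 = 0)
    (Ψ : ℝ → ℝ)
    (hΨ : ∀ x ∈ I, Ψ x = (1 + k * ϕ x) * Real.exp (-(1 + k * ϕ x) - k * G x)) :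
    ∀ x ∈ I, ∀ y ∈ I, Ψ x = Ψ y :=
  abel_potential_constant_general I hIconn f₂ f₃ F G hG k hkf ϕ ϕ' hϕ hode Ψ hΨ
end

section
/- Let x, y solve the SIRv system x' = -xy - νx, y' = xy - γy with x > 0 and x' ≠ 0. Then the function φ(t) = 1/x'(t) and the value u = x(t) satisfy the pointwise Abel relation: φ'(t) = (-(1/u)·φ + (γ - u)·φ² + ν(γ - u)·u·φ³)·x'(t). -/
theorem sirv_pointwise_abel_relation
    (γ ν : ℝ) (x y x' x'' : ℝ → ℝ)
    (hx : ∀ t, HasDerivAt x (x' t) t)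
    (hx' : ∀ t, HasDerivAt x' (x'' t) t)
    (hxpos : ∀ t, 0 < x t) (hx'0 : ∀ t, x' t ≠ 0)
    (hxeq : ∀ t, x' t = -(x t) * y t - ν * x t)
    (hy : ∀ t, HasDerivAt y (x t * y t - γ * y t) t)
    (φ : ℝ → ℝ) (hφ : ∀ t, φ t = 1 / x' t) :
    ∀ t, deriv φ t =
      (-(1 / x t) * φ t + (γ - x t) * φ t ^ 2 + ν * (γ - x t) * x t * φ t ^ 3) * x' t := by
  intro t
  have hφfun : φ = fun s => (x' s)⁻¹ := by
    funext s; rw [hφ s, one_div]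
  -- derivative of φ
  have hdφ : HasDerivAt φ (-(x'' t) / (x' t) ^ 2) t := by
    rw [hφfun]; exact (hx' t).inv (hx'0 t)
  have hderiv : deriv φ t = -(x'' t) / (x' t) ^ 2 := hdφ.deriv
  -- x'' via differentiating the ODE
  have hx'fun : x' = fun s => -(x s) * y s - ν * x s := by
    funext s; exact hxeq s
  have hD : HasDerivAt x' (-(x' t) * y t - x t * (x t * y t - γ * y t)
      - ν * x' t) t := by
    rw [hx'fun]
    have h1 : HasDerivAt (fun s => -(x s) * y s - ν * x s)
        ((-(x' t)) * y t + (-(x t)) * (x t * y t - γ * y t) - ν * x' t) t :=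
      (((hx t).neg.mul (hy t))).sub ((hx t).const_mul ν)
    convert h1 using 1
    rw [hxeq]; ring
  have hx''eq : x'' t = -(x' t) * y t - x t * (x t * y t - γ * y t) - ν * x' t :=
    (hx' t).unique hD
  have hxne := (hxpos t).ne'
  have hx'ne := hx'0 t
  have hyeq : y t = (-(x' t) - ν * x t) / x t := by
    rw [eq_div_iff hxne]
    linarith [hxeq t, mul_comm (y t) (x t)]
  rw [hderiv, hx''eq, hyeq, hφ t]
  field_simp
  ring
end

section
/- For the SIRv model with ν > 0, γ ∈ ℝ, and a solution (x, y) with x, y > 0, the potential Ψ(t) = -(1/ν)·exp(H(t)/ν) is constant, where H(t) = x + y - γ·log x + ν·log y; moreover Ψ(t) < 0 for all t. -/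
theorem sirv_potential_constant_negative
    (γ ν : ℝ) (hν : 0 < ν) (x y : ℝ → ℝ)
    (hxpos : ∀ t, 0 < x t) (hypos : ∀ t, 0 < y t)
    (hx : ∀ t, HasDerivAt x (-(x t) * y t - ν * x t) t)
    (hy : ∀ t, HasDerivAt y (x t * y t - γ * y t) t)
    (H Ψ : ℝ → ℝ)
    (hH : ∀ t, H t = x t + y t - γ * Real.log (x t) + ν * Real.log (y t))
    (hΨ : ∀ t, Ψ t = -(1 / ν) * Real.exp (H t / ν)) :
    (∀ s t : ℝ, Ψ s = Ψ t) ∧ (∀ t, Ψ t < 0) := by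
  have hH' : ∀ t, HasDerivAt H 0 t := by
    intro t
    have h1 : HasDerivAt (fun t => x t + y t - γ * Real.log (x t) + ν * Real.log (y t))
        ((-(x t) * y t - ν * x t) + (x t * y t - γ * y t)
          - γ * ((-(x t) * y t - ν * x t) / x t)
          + ν * ((x t * y t - γ * y t) / y t)) t := by
      exact (((hx t).add (hy t)).sub (((hx t).log (hxpos t).ne').const_mul γ)).add
        (((hy t).log (hypos t).ne').const_mul ν)
    have h2 : ((-(x t) * y t - ν * x t) + (x t * y t - γ * y t)
          - γ * ((-(x t) * y t - ν * x t) / x t)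
          + ν * ((x t * y t - γ * y t) / y t)) = 0 := by
      field_simp [(hxpos t).ne', (hypos t).ne']
      ring
    rw [h2] at h1
    exact h1.congr_deriv rfl |>.congr_of_eventuallyEq (by filter_upwards with s; rw [hH s])
  have hconst : ∀ s t : ℝ, H s = H t := fun s t =>
    is_const_of_deriv_eq_zero (fun u => (hH' u).differentiableAt)
      (fun u => (hH' u).deriv) s t
  constructor
  · intro s t
    rw [hΨ s, hΨ t, hconst s t]
  · intro t
    rw [hΨ t]
    have := Real.exp_pos (H t / ν)
    have : 0 < 1 / ν := by positivity
    nlinarith [Real.exp_pos (H t / ν)]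
end

section
/- If (x, y) solves the SIRv model x' = -xy - νx, y' = xy - γy with ν > 0, x, y > 0, and H⁰ denotes the (constant) value of the conserved quantity H = x + y - γ·log x + ν·log y, then y(t)/ν · exp(y(t)/ν) = (1/ν)·x(t)^{γ/ν}·exp((H⁰ - x(t))/ν) for all t; i.e., y/ν lies on the Lambert curve w·e^w = z with z = (1/ν)·x^{γ/ν}·e^{(H⁰-x)/ν}. -/
/-!
The quantity `H = x + y - γ log x + ν log y` is a first integral of the SIRv system: its
derivative along a solution is `(1 - γ/x) x' + (1 + ν/y) y' = 0`. Solving `H = H⁰` for the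
`y`-terms gives `y/ν + log y = (H⁰ - x)/ν + (γ/ν) log x`, whose exponential is the Lambert
curve relation.
-/

open Real

noncomputable def sirvFirstIntegral (γ ν x y : ℝ) : ℝ :=
  x + y - γ * log x + ν * log y

theorem hasDerivAt_sirvFirstIntegral_zero {γ ν : ℝ} {x y : ℝ → ℝ} {t : ℝ}
    (hxt : 0 < x t) (hyt : 0 < y t)
    (hx : HasDerivAt x (-(x t) * y t - ν * x t) t)
    (hy : HasDerivAt y (x t * y t - γ * y t) t) :
    HasDerivAt (fun s => sirvFirstIntegral γ ν (x s) (y s)) 0 t := by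
  have hlogx := hx.log hxt.ne'
  have hlogy := hy.log hyt.ne'
  refine (((hx.add hy).sub (hlogx.const_mul γ)).add (hlogy.const_mul ν)).congr_deriv ?_
  field_simp
  ring

theorem sirvFirstIntegral_eq_of_hasDerivAt {γ ν : ℝ} {x y : ℝ → ℝ}
    (hxpos : ∀ t, 0 < x t) (hypos : ∀ t, 0 < y t)
    (hx : ∀ t, HasDerivAt x (-(x t) * y t - ν * x t) t)
    (hy : ∀ t, HasDerivAt y (x t * y t - γ * y t) t) (t s : ℝ) :
    sirvFirstIntegral γ ν (x t) (y t) = sirvFirstIntegral γ ν (x s) (y s) :=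
  have hderiv t := hasDerivAt_sirvFirstIntegral_zero (hxpos t) (hypos t) (hx t) (hy t)
  is_const_of_deriv_eq_zero (fun t => (hderiv t).differentiableAt) (fun t => (hderiv t).deriv) t s

theorem div_mul_exp_div_eq_of_sirvFirstIntegral_eq {γ ν x y H : ℝ} (hν : ν ≠ 0)
    (hx : 0 < x) (hy : 0 < y) (hH : sirvFirstIntegral γ ν x y = H) :
    y / ν * exp (y / ν) = 1 / ν * x ^ (γ / ν) * exp ((H - x) / ν) := by
  have hexponent : (H - x) / ν = log y + y / ν - log x * (γ / ν) := by
    rw [← hH, sirvFirstIntegral]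
    field_simp
    ring
  have hpow : 0 < x ^ (γ / ν) := rpow_pos_of_pos hx _
  rw [hexponent, exp_sub, exp_add, exp_log hy, ← rpow_def_of_pos hx]
  field_simp

theorem sirv_lambert_curve
    (γ ν : ℝ) (hν : 0 < ν) (x y : ℝ → ℝ)
    (hxpos : ∀ t, 0 < x t) (hypos : ∀ t, 0 < y t)
    (hx : ∀ t, HasDerivAt x (-(x t) * y t - ν * x t) t)
    (hy : ∀ t, HasDerivAt y (x t * y t - γ * y t) t)
    (H0 : ℝ)
    (hH0 : H0 = x 0 + y 0 - γ * Real.log (x 0) + ν * Real.log (y 0)) :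
    ∀ t, y t / ν * Real.exp (y t / ν) =
      (1 / ν) * (x t) ^ (γ / ν) * Real.exp ((H0 - x t) / ν) := by
  intro t
  refine div_mul_exp_div_eq_of_sirvFirstIntegral_eq hν.ne' (hxpos t) (hypos t) ?_
  rw [hH0, sirvFirstIntegral_eq_of_hasDerivAt hxpos hypos hx hy t 0, sirvFirstIntegral]
end
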